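/- As formal power series in λ over ℚ, ₂F₁(1/4, 3/4; 1/2; λ⁴/256) - (λ²/32)·₂F₁(3/4, 5/4; 3/2; λ⁴/256) = (1 + λ²/16)^{-1/2} = ₁F₀(1/2; —; -λ²/16). -/
import Mathlib


/-- Rising factorial (Pochhammer symbol) over ℚ. -/
def poch (a : ℚ) (m : ℕ) : ℚ := ∏ i ∈ Finset.range m, (a + i)

/-- The `j`-th Taylor coefficient of `₂F₁(α, β; γ; z)`. -/
def hgCoef (α β γ : ℚ) (j : ℕ) : ℚ :=
  poch α j * poch β j / (poch γ j * (Nat.factorial j))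

lemma poch_succ (a : ℚ) (m : ℕ) : poch a (m+1) = poch a m * (a + m) :=
  Finset.prod_range_succ _ _

lemma poch_pos (a : ℚ) (ha : 0 < a) (m : ℕ) : 0 < poch a m := by
  refine Finset.prod_pos fun i _ => ?_
  positivity

lemma L1 (m : ℕ) : poch (1/2) (2*m) = 4^m * poch (1/4) m * poch (3/4) m := by
  induction m with
  | zero => simp [poch]
  | succ n ih =>
    have h : 2*(n+1) = (2*n+1)+1 := by ring
    rw [h, poch_succ, poch_succ, ih, poch_succ, poch_succ]
    push_cast
    ring

lemma L2 (m : ℕ) : poch (1/2) (2*m+1) = (1/2) * 4^m * poch (3/4) m * poch (5/4) m := by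
  induction m with
  | zero => simp [poch]
  | succ n ih =>
    have h : 2*(n+1)+1 = (2*n+1)+1+1 := by ring
    rw [h, poch_succ, poch_succ, ih, poch_succ, poch_succ]
    push_cast
    ring

lemma L3 (m : ℕ) : ((Nat.factorial (2*m) : ℚ)) = 4^m * poch (1/2) m * m.factorial := by
  induction m with
  | zero => simp [poch]
  | succ n ih =>
    rw [show 2*(n+1) = (2*n+1)+1 from by ring, Nat.factorial_succ, Nat.factorial_succ,
      Nat.cast_mul, Nat.cast_mul, ih, poch_succ, Nat.factorial_succ, Nat.cast_mul]
    push_cast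
    ring

lemma L4 (m : ℕ) : ((Nat.factorial (2*m+1) : ℚ)) = 4^m * poch (3/2) m * m.factorial := by
  induction m with
  | zero => simp [poch]
  | succ n ih =>
    rw [show 2*(n+1)+1 = ((2*n+1)+1)+1 from by ring, Nat.factorial_succ, Nat.factorial_succ,
      Nat.cast_mul, Nat.cast_mul, ih, poch_succ, Nat.factorial_succ, Nat.cast_mul]
    push_cast
    ring

lemma keyA (j : ℕ) : hgCoef (1/4) (3/4) (1/2) j * (1/256)^j =
    poch (1/2) (2*j) * ((-1:ℚ)/16) ^ (2*j) / (Nat.factorial (2*j)) := by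
  unfold hgCoef
  rw [L1, L3]
  have h1 : poch ((1:ℚ)/2) j ≠ 0 := (poch_pos _ (by norm_num) j).ne'
  have h2 : ((j.factorial : ℚ)) ≠ 0 := by positivity
  have h3 : ((-1:ℚ)/16)^(2*j) = (1/256)^j := by
    rw [pow_mul]; norm_num
  rw [h3]
  field_simp

lemma keyB (j : ℕ) : (1/32) * hgCoef (3/4) (5/4) (3/2) j * (1/256)^j =
    -(poch (1/2) (2*j+1) * ((-1:ℚ)/16) ^ (2*j+1) / (Nat.factorial (2*j+1))) := by
  unfold hgCoef
  rw [L2, L4]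
  have h1 : poch ((3:ℚ)/2) j ≠ 0 := (poch_pos _ (by norm_num) j).ne'
  have h2 : ((j.factorial : ℚ)) ≠ 0 := by positivity
  have h3 : ((-1:ℚ)/16)^(2*j+1) = -(1/16) * (1/256)^j := by
    rw [pow_succ, pow_mul]; norm_num; ring
  rw [h3]
  field_simp
  ring

/-- As formal power series in `λ` over ℚ:
`₂F₁(1/4,3/4;1/2;λ⁴/256) - (λ²/32)·₂F₁(3/4,5/4;3/2;λ⁴/256) = (1+λ²/16)^{-1/2}`,
the right side being `₁F₀(1/2; —; -λ²/16)`. -/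
theorem stmt12 :
    (PowerSeries.mk fun N =>
        if N % 4 = 0 then hgCoef (1/4) (3/4) (1/2) (N / 4) * (1/256) ^ (N / 4) else 0) -
      (PowerSeries.mk fun N =>
        if N % 4 = 2 then
          (1/32) * hgCoef (3/4) (5/4) (3/2) ((N - 2) / 4) * (1/256) ^ ((N - 2) / 4)
        else 0) =
    (PowerSeries.mk fun N =>
        if N % 2 = 0 then
          poch (1/2) (N / 2) * (-1/16) ^ (N / 2) / (Nat.factorial (N / 2))
        else (0 : ℚ)) := by
  ext N
  rw [map_sub]
  simp only [PowerSeries.coeff_mk]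
  obtain ⟨j, hj⟩ : ∃ j, N = 4*j ∨ N = 4*j+1 ∨ N = 4*j+2 ∨ N = 4*j+3 := ⟨N/4, by omega⟩
  rcases hj with h|h|h|h <;> subst h
  · have e1 : 4*j % 4 = 0 := by omega
    have e2 : 4*j % 2 = 0 := by omega
    have e3 : 4*j / 4 = j := by omega
    have e4 : 4*j / 2 = 2*j := by omega
    simp only [e1, e2, e3, e4, if_true, if_pos rfl]
    rw [if_neg (by omega)]
    rw [keyA]
    ring
  · rw [if_neg (by omega), if_neg (by omega), if_neg (by omega)]
    ring
  · have e3 : (4*j+2-2) / 4 = j := by omega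
    have e4 : (4*j+2) / 2 = 2*j+1 := by omega
    rw [if_neg (by omega), if_pos (by omega), if_pos (by omega), e3, e4, keyB]
    ring
  · rw [if_neg (by omega), if_neg (by omega), if_neg (by omega)]
    ring
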